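/- Lower bound on the cumulative number of safe states (Theorem 1 of the paper, worst-case form): for all times t₀ ≤ t ≤ N, Σ_{i=t}^{N} |Ŝ_i| ≥ |Ŝ_t| + Σ_{i=t+1}^{N} M_i, where M_i := |Ŝ_t ∩ G_t^{i+1}(l, Ŝ_t)|. -/

import Mathlib

/-- Combined Lipschitz bound `L(s, s', τ, τ') = L_s·d_s(s,s') + L_t·|τ − τ'|·Δ`. -/
def Lfun {S : Type*} (ds : S → S → ℝ) (Ls Lt Δ : ℝ) (s s' : S) (τ τ' : ℕ) : ℝ :=
  Ls * ds s s' + Lt * |(τ : ℝ) - (τ' : ℝ)| * Δ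

/-- One-step safe set `S_t(l, X)` (for `t ≥ 1`). -/
def oneStepSafe {S : Type*} (ds : S → S → ℝ) (Ls Lt Δ h : ℝ) (l : ℕ → S → ℝ)
    (X : Set S) (t : ℕ) : Set S :=
  {s | ∃ s' ∈ X, l (t - 1) s' - Lfun ds Ls Lt Δ s s' t (t - 1) ≥ h}

/-- Conservative safe set `G_{τ'}^{τ}(l, X)` (for `τ' < τ`). -/
def consSafe {S : Type*} (ds : S → S → ℝ) (Ls Lt Δ h : ℝ) (l : ℕ → S → ℝ)
    (X : Set S) (τ' τ : ℕ) : Set S :=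
  {s | ∃ s' ∈ X, l τ' s' - Lfun ds Ls Lt Δ s s' τ τ' ≥ h}
/-- One-step reachable set: `X` together with the states reachable from `X` in one step. -/
def Rreach {S A : Type*} (f : S → A → S) (X : Set S) : Set S :=
  X ∪ {s | ∃ s' ∈ X, ∃ a : A, s = f s' a}

/-- One-step returnable set: `X` together with the states from which `X` can be
reached in one step. -/
def Rret {S A : Type*} (f : S → A → S) (X : Set S) : Set S :=
  X ∪ {s | ∃ a : A, f s a ∈ X}

/-- The recursively defined safe sets: `hatS … i = Ŝ_i`, with `Ŝ_{t₀} = X₀` and, for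
`i > t₀`, `Ŝ_i = S_i(l, Ŝ_{i−1}) ∩ R_reach(Ŝ_{i−1}) ∩ R_ret(G_{i−1}^{i+1}(l, Ŝ_{i−1}))`. -/
def hatS {S A : Type*} (f : S → A → S) (ds : S → S → ℝ) (Ls Lt Δ h : ℝ)
    (l : ℕ → S → ℝ) (t₀ : ℕ) (X₀ : Set S) : ℕ → Set S := fun i =>
  Nat.rec X₀
    (fun n prev =>
      oneStepSafe ds Ls Lt Δ h l prev (t₀ + n + 1) ∩ Rreach f prev ∩
        Rret f (consSafe ds Ls Lt Δ h l prev (t₀ + n) (t₀ + n + 2)))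
    (i - t₀)

/-!
Write `K_τ = Ŝ_t ∩ G_t^τ(l, Ŝ_t)`. By induction on `i ≥ t`, `K_{i+1} ⊆ Ŝ_i`. For the step, a
point of `K_{i+2}` lies in `K_{i+1} ⊆ Ŝ_i`, and so does its witness, which witnesses itself.
Temporal consistency of `l` re-anchors the witness inequality from time `t` to time `i`, which
places the point in `G_i^{i+2}(l, Ŝ_i) ⊆ G_i^{i+1}(l, Ŝ_i) = S_{i+1}(l, Ŝ_i)`; the reachability
and returnability constraints hold because `Ŝ_i ⊆ R_reach(Ŝ_i)` and `G ⊆ R_ret(G)`. Summing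
`|K_{i+1}| ≤ |Ŝ_i|` over `t < i ≤ N` gives the bound.
-/

section

variable {S : Type*} (ds : S → S → ℝ) (Ls Lt Δ h : ℝ) (l : ℕ → S → ℝ)

lemma Lfun_le_Lfun_of_le (hLtΔ : 0 ≤ Lt * Δ) (s s' : S) {τ' τ₁ τ₂ : ℕ}
    (h₁ : τ' ≤ τ₁) (h₂ : τ₁ ≤ τ₂) :
    Lfun ds Ls Lt Δ s s' τ₁ τ' ≤ Lfun ds Ls Lt Δ s s' τ₂ τ' := by
  have habs : |(τ₁ : ℝ) - τ'| ≤ |(τ₂ : ℝ) - τ'| := by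
    rw [abs_of_nonneg (by simpa using h₁), abs_of_nonneg (by simp; omega)]
    simpa using h₂
  unfold Lfun
  nlinarith

lemma Lfun_self_le (hds_nonneg : ∀ s s' : S, 0 ≤ ds s s') (hds_refl : ∀ s : S, ds s s = 0)
    (hLs : 0 ≤ Ls) (s s' : S) (τ τ' : ℕ) :
    Lfun ds Ls Lt Δ s' s' τ τ' ≤ Lfun ds Ls Lt Δ s s' τ τ' := by
  simp only [Lfun, hds_refl, mul_zero, add_le_add_iff_right]
  exact mul_nonneg hLs (hds_nonneg s s')

/-- Since `|τ - t| = |τ - i| + |i - t|`, re-anchoring the witness inequality at time `i` only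
moves part of the temporal Lipschitz budget into the temporal-consistency bound of `l`. -/
lemma sub_Lfun_le_sub_Lfun_of_temporal
    (hl_temp : ∀ (τ τ' : ℕ) (s : S), l τ s ≥ l τ' s - Lt * |(τ : ℝ) - (τ' : ℝ)| * Δ)
    (s s' : S) {t i τ : ℕ} (hti : t ≤ i) (hiτ : i ≤ τ) :
    l t s' - Lfun ds Ls Lt Δ s s' τ t ≤ l i s' - Lfun ds Ls Lt Δ s s' τ i := by
  have hsplit : |(τ : ℝ) - t| = |(τ : ℝ) - i| + |(i : ℝ) - t| := by
    rw [abs_of_nonneg (by simp; omega), abs_of_nonneg (by simpa using hiτ),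
      abs_of_nonneg (by simpa using hti)]
    ring
  have := hl_temp i t s'
  simp only [Lfun, hsplit]
  linarith

lemma consSafe_mono {X Y : Set S} (hXY : X ⊆ Y) (τ' τ : ℕ) :
    consSafe ds Ls Lt Δ h l X τ' τ ⊆ consSafe ds Ls Lt Δ h l Y τ' τ :=
  fun _ ⟨s', hs', hs⟩ => ⟨s', hXY hs', hs⟩

lemma consSafe_subset_of_le (hLtΔ : 0 ≤ Lt * Δ) (X : Set S) {τ' τ₁ τ₂ : ℕ}
    (h₁ : τ' ≤ τ₁) (h₂ : τ₁ ≤ τ₂) :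
    consSafe ds Ls Lt Δ h l X τ' τ₂ ⊆ consSafe ds Ls Lt Δ h l X τ' τ₁ :=
  fun s ⟨s', hs', hs⟩ =>
    ⟨s', hs', hs.trans (sub_le_sub_left (Lfun_le_Lfun_of_le ds Ls Lt Δ hLtΔ s s' h₁ h₂) _)⟩

/-- A witness `s'` for `s` is also a witness for itself. -/
lemma consSafe_eq_consSafe_inter (hds_nonneg : ∀ s s' : S, 0 ≤ ds s s')
    (hds_refl : ∀ s : S, ds s s = 0) (hLs : 0 ≤ Ls) (X : Set S) (τ' τ : ℕ) :
    consSafe ds Ls Lt Δ h l X τ' τ =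
      consSafe ds Ls Lt Δ h l (X ∩ consSafe ds Ls Lt Δ h l X τ' τ) τ' τ := by
  refine (consSafe_mono ds Ls Lt Δ h l Set.inter_subset_left τ' τ).antisymm' ?_
  rintro s ⟨s', hs', hs⟩
  have hself := Lfun_self_le ds Ls Lt Δ hds_nonneg hds_refl hLs s s' τ τ'
  exact ⟨s', ⟨hs', s', hs', by linarith⟩, hs⟩

lemma consSafe_subset_consSafe_of_temporal
    (hl_temp : ∀ (τ τ' : ℕ) (s : S), l τ s ≥ l τ' s - Lt * |(τ : ℝ) - (τ' : ℝ)| * Δ)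
    (X : Set S) {t i τ : ℕ} (hti : t ≤ i) (hiτ : i ≤ τ) :
    consSafe ds Ls Lt Δ h l X t τ ⊆ consSafe ds Ls Lt Δ h l X i τ :=
  fun s ⟨s', hs', hs⟩ =>
    ⟨s', hs', hs.trans (sub_Lfun_le_sub_Lfun_of_temporal ds Ls Lt Δ l hl_temp s s' hti hiτ)⟩

lemma oneStepSafe_succ (X : Set S) (i : ℕ) :
    oneStepSafe ds Ls Lt Δ h l X (i + 1) = consSafe ds Ls Lt Δ h l X i (i + 1) :=
  rfl

lemma subset_Rreach {A : Type*} (f : S → A → S) (X : Set S) : X ⊆ Rreach f X :=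
  Set.subset_union_left

lemma subset_Rret {A : Type*} (f : S → A → S) (X : Set S) : X ⊆ Rret f X :=
  Set.subset_union_left

variable {A : Type*} (f : S → A → S) (t₀ : ℕ) (X₀ : Set S)

lemma hatS_succ {i : ℕ} (hi : t₀ ≤ i) :
    hatS f ds Ls Lt Δ h l t₀ X₀ (i + 1) =
      oneStepSafe ds Ls Lt Δ h l (hatS f ds Ls Lt Δ h l t₀ X₀ i) (i + 1) ∩
        Rreach f (hatS f ds Ls Lt Δ h l t₀ X₀ i) ∩
        Rret f (consSafe ds Ls Lt Δ h l (hatS f ds Ls Lt Δ h l t₀ X₀ i) i (i + 2)) := by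
  have h₁ : i + 1 - t₀ = (i - t₀) + 1 := by omega
  have h₂ : t₀ + (i - t₀) = i := by omega
  simp only [hatS, h₁, h₂]

lemma inter_consSafe_subset_hatS_succ (hLtΔ : 0 ≤ Lt * Δ) {i : ℕ} (hi : t₀ ≤ i) :
    hatS f ds Ls Lt Δ h l t₀ X₀ i ∩
        consSafe ds Ls Lt Δ h l (hatS f ds Ls Lt Δ h l t₀ X₀ i) i (i + 2) ⊆
      hatS f ds Ls Lt Δ h l t₀ X₀ (i + 1) := by
  rintro s ⟨hsX, hsG⟩
  rw [hatS_succ ds Ls Lt Δ h l f t₀ X₀ hi, oneStepSafe_succ]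
  exact ⟨⟨consSafe_subset_of_le ds Ls Lt Δ h l hLtΔ _ i.le_succ (Nat.le_succ _) hsG,
    subset_Rreach f _ hsX⟩, subset_Rret f _ hsG⟩

lemma inter_consSafe_subset_hatS (hds_nonneg : ∀ s s' : S, 0 ≤ ds s s')
    (hds_refl : ∀ s : S, ds s s = 0) (hLs : 0 ≤ Ls) (hLtΔ : 0 ≤ Lt * Δ)
    (hl_temp : ∀ (τ τ' : ℕ) (s : S), l τ s ≥ l τ' s - Lt * |(τ : ℝ) - (τ' : ℝ)| * Δ)
    {t : ℕ} (ht : t₀ ≤ t) {i : ℕ} (hi : t ≤ i) :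
    hatS f ds Ls Lt Δ h l t₀ X₀ t ∩
        consSafe ds Ls Lt Δ h l (hatS f ds Ls Lt Δ h l t₀ X₀ t) t (i + 1) ⊆
      hatS f ds Ls Lt Δ h l t₀ X₀ i := by
  induction i, hi using Nat.le_induction with
  | base => exact Set.inter_subset_left
  | succ i hti ih =>
    have hK : hatS f ds Ls Lt Δ h l t₀ X₀ t ∩
        consSafe ds Ls Lt Δ h l (hatS f ds Ls Lt Δ h l t₀ X₀ t) t (i + 2) ⊆
          hatS f ds Ls Lt Δ h l t₀ X₀ i :=
      (Set.inter_subset_inter_right _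
        (consSafe_subset_of_le ds Ls Lt Δ h l hLtΔ _ (by omega) (by omega))).trans ih
    have hG : consSafe ds Ls Lt Δ h l (hatS f ds Ls Lt Δ h l t₀ X₀ t) t (i + 2) ⊆
        consSafe ds Ls Lt Δ h l (hatS f ds Ls Lt Δ h l t₀ X₀ i) i (i + 2) := by
      rw [consSafe_eq_consSafe_inter ds Ls Lt Δ h l hds_nonneg hds_refl hLs]
      exact (consSafe_subset_consSafe_of_temporal ds Ls Lt Δ h l hl_temp _ hti (by omega)).trans
        (consSafe_mono ds Ls Lt Δ h l hK i (i + 2))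
    exact (Set.subset_inter hK (Set.inter_subset_right.trans hG)).trans
      (inter_consSafe_subset_hatS_succ ds Ls Lt Δ h l f t₀ X₀ hLtΔ (ht.trans hti))

end

theorem cumulative_safe_states_lower_bound_general {S A : Type*} [Fintype S]
    (f : S → A → S)
    (ds : S → S → ℝ) (hds_nonneg : ∀ s s' : S, 0 ≤ ds s s')
    (hds_refl : ∀ s : S, ds s s = 0)
    (Ls Lt Δ : ℝ) (hLs : 0 ≤ Ls) (hLt : 0 ≤ Lt) (hΔ : 0 ≤ Δ) (h : ℝ)
    (l : ℕ → S → ℝ)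
    (hl_temp : ∀ (τ τ' : ℕ) (s : S), l τ s ≥ l τ' s - Lt * |(τ : ℝ) - (τ' : ℝ)| * Δ)
    (t₀ : ℕ) (X₀ : Set S)
    (t N : ℕ) (ht : t₀ ≤ t) (htN : t ≤ N) :
    (hatS f ds Ls Lt Δ h l t₀ X₀ t).ncard +
        ∑ i ∈ Finset.Icc (t + 1) N,
          (hatS f ds Ls Lt Δ h l t₀ X₀ t ∩
            consSafe ds Ls Lt Δ h l (hatS f ds Ls Lt Δ h l t₀ X₀ t) t (i + 1)).ncard ≤
      ∑ i ∈ Finset.Icc t N, (hatS f ds Ls Lt Δ h l t₀ X₀ i).ncard := by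
  rw [Finset.Icc_eq_cons_Ioc htN, Finset.sum_cons, ← Finset.Icc_add_one_left_eq_Ioc]
  refine add_le_add le_rfl (Finset.sum_le_sum fun i hi => Set.ncard_le_ncard ?_)
  exact inter_consSafe_subset_hatS ds Ls Lt Δ h l f t₀ X₀ hds_nonneg hds_refl hLs
    (mul_nonneg hLt hΔ) hl_temp ht (Nat.le_of_succ_le (Finset.mem_Icc.1 hi).1)

theorem cumulative_safe_states_lower_bound {S A : Type*} [Fintype S] [Fintype A]
    (f : S → A → S)
    (ds : S → S → ℝ) (hds_nonneg : ∀ s s' : S, 0 ≤ ds s s')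
    (hds_refl : ∀ s : S, ds s s = 0)
    (Ls Lt Δ : ℝ) (hLs : 0 ≤ Ls) (hLt : 0 ≤ Lt) (hΔ : 0 ≤ Δ) (h : ℝ)
    (l : ℕ → S → ℝ)
    (hl_temp : ∀ (τ τ' : ℕ) (s : S), l τ s ≥ l τ' s - Lt * |(τ : ℝ) - (τ' : ℝ)| * Δ)
    (t₀ : ℕ) (ht₀ : 1 ≤ t₀) (X₀ : Set S)
    (t N : ℕ) (ht : t₀ ≤ t) (htN : t ≤ N) :
    (hatS f ds Ls Lt Δ h l t₀ X₀ t).ncard +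
        ∑ i ∈ Finset.Icc (t + 1) N,
          (hatS f ds Ls Lt Δ h l t₀ X₀ t ∩
            consSafe ds Ls Lt Δ h l (hatS f ds Ls Lt Δ h l t₀ X₀ t) t (i + 1)).ncard ≤
      ∑ i ∈ Finset.Icc t N, (hatS f ds Ls Lt Δ h l t₀ X₀ i).ncard :=
  cumulative_safe_states_lower_bound_general f ds hds_nonneg hds_refl Ls Lt Δ hLs hLt hΔ h l hl_temp
    t₀ X₀ t N ht htN
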